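/- Suppose y₁(t) and y₂(t) are two bounded sequences taking values in ℝⁿ satisfying Σ_{t=1}^{∞} ‖y₁(t) − y₂(t)‖ < ∞. Then y₁(t) is sufficiently rich of order p if and only if y₂(t) is sufficiently rich of order p. -/

import Mathlib

open Finset

/-- The stacked block ξ_m(t) = [x(t+1), …, x(t+m)]ᵀ of an ℝⁿ-valued sequence. -/
def srBlock {n : ℕ} (x : ℕ → Fin n → ℝ) (m : ℕ) (t : ℕ) : Fin m × Fin n → ℝ :=
  fun q => x (t + 1 + (q.1 : ℕ)) q.2

/-- A sequence x(t) ∈ ℝⁿ is sufficiently rich of order m (in N steps) if there exist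
N ∈ ℤ⁺ and α > 0 such that Σ_{t=t₀+1}^{t₀+N} ξ_m(t) ξ_m(t)ᵀ ≥ α I uniformly in t₀. -/
def SuffRich {n : ℕ} (x : ℕ → Fin n → ℝ) (m : ℕ) : Prop :=
  ∃ N : ℕ, 0 < N ∧ ∃ α : ℝ, 0 < α ∧ ∀ t0 : ℕ,
    ((∑ t ∈ Finset.Icc (t0 + 1) (t0 + N),
        Matrix.vecMulVec (srBlock x m t) (srBlock x m t)) -
      α • (1 : Matrix (Fin m × Fin n) (Fin m × Fin n) ℝ)).PosSemidef

/-!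
If `x` is sufficiently rich with windows of length `N` and level `α`, and `y` differs from `x` by
a sequence tending to zero, then far enough out the stacked blocks of `x` and `y` differ, over a
window of length `N`, by a total squared Euclidean norm `≤ α / 4`. Since
`(a ⬝ᵥ v)² ≤ 2 (b ⬝ᵥ v)² + 2 ‖a - b‖² ‖v‖²` (Cauchy–Schwarz), such a late window gives `y` the
level `α / 4`, and every window of length `T + N` contains one. A summable distance tends to zero.
-/

open Matrix Filter Topology

section GramSum

variable {ι k : Type*} [Fintype k]

theorem dotProduct_sum_vecMulVec_self_mulVec (s : Finset ι) (a : ι → k → ℝ) (v : k → ℝ) :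
    v ⬝ᵥ ((∑ t ∈ s, vecMulVec (a t) (a t)) *ᵥ v) = ∑ t ∈ s, (a t ⬝ᵥ v) ^ 2 := by
  simp only [sum_mulVec, dotProduct_sum, vecMulVec_mulVec]
  refine sum_congr rfl fun t _ => ?_
  rw [op_smul_eq_smul, dotProduct_smul, smul_eq_mul, dotProduct_comm, sq]

theorem posSemidef_sum_vecMulVec_self_sub_smul_one_iff [DecidableEq k] (s : Finset ι)
    (a : ι → k → ℝ) (α : ℝ) :
    ((∑ t ∈ s, vecMulVec (a t) (a t)) - α • 1).PosSemidef ↔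
      ∀ v, α * (v ⬝ᵥ v) ≤ ∑ t ∈ s, (a t ⬝ᵥ v) ^ 2 := by
  have hGram : (∑ t ∈ s, vecMulVec (a t) (a t)).PosSemidef :=
    posSemidef_sum s fun t _ => by simpa using posSemidef_vecMulVec_self_star (a t)
  have hHerm : ((∑ t ∈ s, vecMulVec (a t) (a t)) - α • 1).IsHermitian :=
    hGram.isHermitian.sub (isHermitian_one.smul (IsSelfAdjoint.all α))
  simp only [posSemidef_iff_dotProduct_mulVec, hHerm, true_and, star_trivial, sub_mulVec,
    dotProduct_sub, dotProduct_sum_vecMulVec_self_mulVec, smul_mulVec, one_mulVec,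
    dotProduct_smul, smul_eq_mul, sub_nonneg]

theorem sq_dotProduct_le_two_mul_sq_add (a b v : k → ℝ) :
    (a ⬝ᵥ v) ^ 2 ≤ 2 * (b ⬝ᵥ v) ^ 2 + 2 * ((a - b) ⬝ᵥ (a - b) * (v ⬝ᵥ v)) := by
  have hCS : ((a - b) ⬝ᵥ v) ^ 2 ≤ (a - b) ⬝ᵥ (a - b) * (v ⬝ᵥ v) := by
    simpa only [dotProduct, sq] using sum_mul_sq_le_sq_mul_sq univ (a - b) v
  have hsplit : a ⬝ᵥ v = b ⬝ᵥ v + (a - b) ⬝ᵥ v := by rw [sub_dotProduct]; ring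
  rw [hsplit]
  nlinarith [sq_nonneg (b ⬝ᵥ v - (a - b) ⬝ᵥ v)]

theorem le_sum_sq_dotProduct_of_sum_dotProduct_sub_le {s : Finset ι} {a b : ι → k → ℝ} {α : ℝ}
    (ha : ∀ v, α * (v ⬝ᵥ v) ≤ ∑ t ∈ s, (a t ⬝ᵥ v) ^ 2)
    (hab : ∑ t ∈ s, (a t - b t) ⬝ᵥ (a t - b t) ≤ α / 4) (v : k → ℝ) :
    α / 4 * (v ⬝ᵥ v) ≤ ∑ t ∈ s, (b t ⬝ᵥ v) ^ 2 := by
  have hv : 0 ≤ v ⬝ᵥ v := by simpa using dotProduct_star_self_nonneg v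
  have hexpand := calc α * (v ⬝ᵥ v) ≤ ∑ t ∈ s, (a t ⬝ᵥ v) ^ 2 := ha v
    _ ≤ ∑ t ∈ s, (2 * (b t ⬝ᵥ v) ^ 2 + 2 * ((a t - b t) ⬝ᵥ (a t - b t) * (v ⬝ᵥ v))) :=
      sum_le_sum fun t _ => sq_dotProduct_le_two_mul_sq_add _ _ _
    _ = 2 * ∑ t ∈ s, (b t ⬝ᵥ v) ^ 2 + 2 * (∑ t ∈ s, (a t - b t) ⬝ᵥ (a t - b t)) * (v ⬝ᵥ v) := by
      rw [sum_add_distrib, ← mul_sum, ← mul_sum, ← sum_mul]; ring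
  nlinarith [mul_le_mul_of_nonneg_right hab hv]

end GramSum

theorem tendsto_sum_Icc_add_of_tendsto_zero {M : Type*} [AddCommMonoid M] [TopologicalSpace M]
    [ContinuousAdd M] {f : ℕ → M} (hf : Tendsto f atTop (𝓝 0)) (N : ℕ) :
    Tendsto (fun u => ∑ t ∈ Icc (u + 1) (u + N), f t) atTop (𝓝 0) := by
  have hshift (u : ℕ) : ∑ t ∈ Icc (u + 1) (u + N), f t = ∑ i ∈ Icc 1 N, f (u + i) := by
    rw [← image_add_left_Icc, sum_image (add_right_injective u).injOn]
  simp only [hshift]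
  simpa using tendsto_finsetSum (Icc 1 N) fun i _ => hf.comp (tendsto_add_atTop_nat i)

section SufficientRichness

variable {n : ℕ}

theorem tendsto_srBlock_zero {d : ℕ → Fin n → ℝ} (hd : Tendsto d atTop (𝓝 0)) (m : ℕ) :
    Tendsto (srBlock d m) atTop (𝓝 0) :=
  tendsto_pi_nhds.2 fun q =>
    tendsto_pi_nhds.1 (hd.comp ((tendsto_add_atTop_nat q.1).comp (tendsto_add_atTop_nat 1))) q.2

theorem SuffRich.of_tendsto_sub {x y : ℕ → Fin n → ℝ} {m : ℕ} (hx : SuffRich x m)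
    (hxy : Tendsto (fun t => x t - y t) atTop (𝓝 0)) : SuffRich y m := by
  obtain ⟨N, hN, α, hα, hwin⟩ := hx
  have hgap : Tendsto (fun t => srBlock (fun s => x s - y s) m t ⬝ᵥ
      srBlock (fun s => x s - y s) m t) atTop (𝓝 0) :=
    ((continuous_id.dotProduct continuous_id).tendsto' 0 0 (dotProduct_zero _)).comp
      (tendsto_srBlock_zero hxy m)
  have hα4 : 0 < α / 4 := by positivity
  obtain ⟨T, hT⟩ := eventually_atTop.1
    ((tendsto_sum_Icc_add_of_tendsto_zero hgap N).eventually (ge_mem_nhds hα4))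
  refine ⟨T + N, by omega, α / 4, hα4, fun t0 => ?_⟩
  refine (posSemidef_sum_vecMulVec_self_sub_smul_one_iff _ _ _).2 fun v => ?_
  calc α / 4 * (v ⬝ᵥ v)
      ≤ ∑ t ∈ Icc (t0 + T + 1) (t0 + T + N), (srBlock y m t ⬝ᵥ v) ^ 2 :=
        le_sum_sq_dotProduct_of_sum_dotProduct_sub_le
          ((posSemidef_sum_vecMulVec_self_sub_smul_one_iff _ _ _).1 (hwin (t0 + T)))
          (hT _ (by omega)) v
    _ ≤ ∑ t ∈ Icc (t0 + 1) (t0 + (T + N)), (srBlock y m t ⬝ᵥ v) ^ 2 :=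
        sum_le_sum_of_subset_of_nonneg (Icc_subset_Icc (by omega) (by omega))
          fun _ _ _ => sq_nonneg _

theorem suffRich_iff_of_tendsto_sub {x y : ℕ → Fin n → ℝ} {m : ℕ}
    (hxy : Tendsto (fun t => x t - y t) atTop (𝓝 0)) : SuffRich x m ↔ SuffRich y m :=
  ⟨fun hx => hx.of_tendsto_sub hxy, fun hy => hy.of_tendsto_sub (by simpa using hxy.neg)⟩

end SufficientRichness

theorem suffRich_iff_of_summable_dist_general
    (n p : ℕ) (y1 y2 : ℕ → Fin n → ℝ)
    (hsum : Summable fun t => ‖y1 t - y2 t‖) :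
    SuffRich y1 p ↔ SuffRich y2 p :=
  suffRich_iff_of_tendsto_sub (tendsto_zero_iff_norm_tendsto_zero.2 hsum.tendsto_atTop_zero)

/-- Lemma 1 (Bai–Sastry): if two bounded ℝⁿ-valued sequences satisfy
Σ_{t} ‖y₁(t) − y₂(t)‖ < ∞, then y₁ is sufficiently rich of order p iff y₂ is. -/
theorem suffRich_iff_of_summable_dist
    (n p : ℕ) (y1 y2 : ℕ → Fin n → ℝ)
    (C1 : ℝ) (hy1 : ∀ t, ‖y1 t‖ ≤ C1)
    (C2 : ℝ) (hy2 : ∀ t, ‖y2 t‖ ≤ C2)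
    (hsum : Summable fun t => ‖y1 t - y2 t‖) :
    SuffRich y1 p ↔ SuffRich y2 p :=
  suffRich_iff_of_summable_dist_general n p y1 y2 hsum
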